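/- For every edge price α > (n−1)/2, no stable (pure Nash equilibrium) network (G(s),α) of a network creation game with n agents contains a cycle of length 3. -/

import Mathlib

open scoped BigOperators

namespace NCG

variable {V : Type*} [Fintype V] [DecidableEq V]

/-- The network induced by a strategy vector `st`: `{u,v}` is an edge iff (at least)
one of the endpoints buys it, i.e. `v ∈ st u` or `u ∈ st v`. -/
def graph (st : V → Finset V) : SimpleGraph V where
  Adj u v := u ≠ v ∧ (v ∈ st u ∨ u ∈ st v)
  symm := ⟨fun u v h => ⟨h.1.symm, h.2.symm⟩⟩
  loopless := ⟨fun u h => h.1 rfl⟩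

open scoped Classical in
/-- The distance cost of agent `u`: the sum of the graph distances to all nodes if the
network is connected, and `⊤` otherwise. -/
noncomputable def distcost (st : V → Finset V) (u : V) : EReal :=
  if (graph st).Connected then (((∑ w : V, ((graph st).dist u w : ℝ)) : ℝ) : EReal) else ⊤

/-- The cost of agent `u`: `α` per bought edge plus the distance cost. -/
noncomputable def cost (α : ℝ) (st : V → Finset V) (u : V) : EReal :=
  ((α * (st u).card : ℝ) : EReal) + distcost st u

/-- A network is stable (a pure Nash equilibrium) if no agent `u` can strictly
decrease her cost by unilaterally changing her own strategy set `st u`. -/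
def Stable (α : ℝ) (st : V → Finset V) : Prop :=
  ∀ u : V, ∀ t : Finset V, u ∉ t → cost α st u ≤ cost α (Function.update st u t) u

/-- The social cost of a network: the sum of the costs of all agents. -/
noncomputable def socialCost (α : ℝ) (st : V → Finset V) : EReal :=
  ∑ u : V, cost α st u

/-- The optimal (minimum) social cost over all strategy vectors on agent set `W`. -/
noncomputable def optCost (α : ℝ) (W : Type*) [Fintype W] [DecidableEq W] : EReal :=
  sInf {c : EReal | ∃ st : W → Finset W, (∀ u, u ∉ st u) ∧ c = socialCost α st}

/-- `T` is a shortest path tree of `G` rooted at `r`: a spanning tree of `G`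
preserving all distances from `r`. -/
def IsSPT (G : SimpleGraph V) (r : V) (T : SimpleGraph V) : Prop :=
  T ≤ G ∧ T.IsTree ∧ ∀ x, T.dist r x = G.dist r x

/-- The subgraph of `G` induced on `S` is biconnected: it has at least 3 vertices,
it is connected, and it has no cut vertex. -/
def IsBiconnectedOn (G : SimpleGraph V) (S : Set V) : Prop :=
  3 ≤ S.ncard ∧ (G.induce S).Connected ∧ ∀ x ∈ S, (G.induce (S \ {x})).Connected

/-- `S` induces a biconnected component of `G`: a maximal biconnected induced subgraph. -/
def IsBiconnectedComponent (G : SimpleGraph V) (S : Set V) : Prop :=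
  IsBiconnectedOn G S ∧ ∀ S' : Set V, S ⊆ S' → IsBiconnectedOn G S' → S' = S

/-- `⟨v,u⟩` is a critical pair (with witnesses `v₁, v₂, u'` and biconnected component `H`)
of the network induced by the strategy vector `st`:
(1) `v ∈ H` buys the two distinct non-bridge edges `(v,v₁)` and `(v,v₂)` with `v₁,v₂ ∈ H`;
(2) `u ∈ H`, `u ≠ v`, buys an edge `(u,u')` with `u' ∈ H`, `u' ≠ v`;
(3) `d(v,u) ≥ 2`;
(4) some shortest path from `v` to `u` uses the edge `(v,v₁)`;
(5) some shortest path from `v` to `u'` does not use the edge `(u,u')`. -/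
def IsCriticalPair (st : V → Finset V) (H : Set V) (v u v₁ v₂ u' : V) : Prop :=
  IsBiconnectedComponent (graph st) H ∧
  v ∈ H ∧ v₁ ∈ H ∧ v₂ ∈ H ∧ v₁ ≠ v₂ ∧
  v₁ ∈ st v ∧ v₂ ∈ st v ∧
  ¬ (graph st).IsBridge s(v, v₁) ∧ ¬ (graph st).IsBridge s(v, v₂) ∧
  u ∈ H ∧ u ≠ v ∧ u' ∈ H ∧ u' ≠ v ∧ u' ∈ st u ∧
  2 ≤ (graph st).dist v u ∧
  (∃ p : (graph st).Walk v u, p.IsPath ∧ p.length = (graph st).dist v u ∧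
    s(v, v₁) ∈ p.edges) ∧
  (∃ p : (graph st).Walk v u', p.IsPath ∧ p.length = (graph st).dist v u' ∧
    s(u, u') ∉ p.edges)

/-- A critical pair is strong if moreover some shortest path from `u` to `v₂`
does not use the edge `(v,v₂)`. -/
def IsStrongCriticalPair (st : V → Finset V) (H : Set V) (v u v₁ v₂ u' : V) : Prop :=
  IsCriticalPair st H v u v₁ v₂ u' ∧
  ∃ p : (graph st).Walk u v₂, p.IsPath ∧ p.length = (graph st).dist u v₂ ∧
    s(v, v₂) ∉ p.edges

/-- A cycle `c` in `G` is a min cycle if for every two vertices on the cycle, their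
distance along the cycle equals their distance in `G`. -/
def IsMinCycle (G : SimpleGraph V) {a : V} (c : G.Walk a a) : Prop :=
  c.IsCycle ∧ ∀ (x : V) (hx : x ∈ c.toSubgraph.verts) (y : V) (hy : y ∈ c.toSubgraph.verts),
    c.toSubgraph.coe.dist ⟨x, hx⟩ ⟨y, hy⟩ = G.dist x y

/-- A cycle `c` of the network induced by `st` is directed if, traversed in one of the
two possible directions, every edge of the cycle is bought by its tail vertex. -/
def IsDirectedCycle (st : V → Finset V) {a : V} (c : (graph st).Walk a a) : Prop :=
  c.IsCycle ∧
    ((∀ i < c.length, c.getVert (i + 1) ∈ st (c.getVert i)) ∨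
     (∀ i < c.length, c.getVert i ∈ st (c.getVert (i + 1))))

/-- `c` is a centroid of (the subgraph of `G` induced on) `S`: every connected component
obtained from `S` by removing `c` contains at most `|S|/2` vertices. -/
def IsCentroidOn (G : SimpleGraph V) (S : Set V) (c : V) : Prop :=
  c ∈ S ∧ ∀ x ∈ S, x ≠ c →
    2 * {y | y ∈ S ∧ ∃ p : G.Walk x y, c ∉ p.support ∧ ∀ z ∈ p.support, z ∈ S}.ncard
      ≤ S.ncard

end NCG

/-
Let `x y z` be a triangle of a stable network in which `x` buys `xy`. After dropping `xy`, agent `x`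
still reaches `y` through `z`, so its distance to a vertex `w` grows by at most one, and only if
`d(y,w) < d(x,w) ≤ d(z,w)`. Stability therefore bounds `α` by the number of such `w`.
Two edges of the triangle are bought either by one agent (`x` buys `xy` and `xz`) or consecutively
(`x` buys `xy`, `y` buys `yz`). In both cases the two vertex sets so obtained are disjoint and miss
`x`, whence `2α ≤ n - 1`.
-/

open Finset SimpleGraph

namespace SimpleGraph

variable {V : Type*} {G : SimpleGraph V} {u v w x y z a : V}

lemma Walk.dist_add_dist_le_length [DecidableEq V] (p : G.Walk u v) (ha : a ∈ p.support) :
    G.dist u a + G.dist a v ≤ p.length := by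
  have h := congrArg Walk.length (p.take_spec ha)
  rw [Walk.length_append] at h
  exact h ▸ add_le_add (dist_le _) (dist_le _)

lemma dist_deleteEdges_le_of_lt {e : Sym2 V} (ha : a ∈ e) (hr : G.Reachable u w)
    (h : G.dist u w < G.dist u a + G.dist a w) :
    (G.deleteEdges {e}).dist u w ≤ G.dist u w := by
  classical
  obtain ⟨p, hp⟩ := hr.exists_walk_length_eq_dist
  have he : e ∉ p.edges := fun he ↦ by
    have := p.dist_add_dist_le_length
      (p.fst_mem_support_of_mem_edges ((Sym2.other_spec ha).symm ▸ he))
    omega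
  calc _ ≤ (p.toDeleteEdge e he).length := dist_le _
    _ = G.dist u w := by simp [hp]

lemma deleteEdges_adj_of_adj_of_adj (hxz : G.Adj x z) (hzy : G.Adj z y) :
    (G.deleteEdges {s(x, y)}).Adj x z ∧ (G.deleteEdges {s(x, y)}).Adj z y := by
  simp [hxz, hzy, hzy.ne, hxz.ne']

lemma Connected.connected_deleteEdges_of_adj_of_adj (hG : G.Connected) (hxz : G.Adj x z)
    (hzy : G.Adj z y) : (G.deleteEdges {s(x, y)}).Connected := by
  obtain ⟨hxz', hzy'⟩ := deleteEdges_adj_of_adj_of_adj hxz hzy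
  exact hG.connected_delete_edge_of_not_isBridge fun hb ↦
    isBridge_iff.mp hb (hxz'.reachable.trans hzy'.reachable)

lemma dist_deleteEdges_le_of_dist_le (hG : G.Connected) (hxy : G.Adj x y)
    (h : G.dist x w ≤ G.dist y w) : (G.deleteEdges {s(x, y)}).dist x w ≤ G.dist x w :=
  dist_deleteEdges_le_of_lt (Sym2.mem_mk_right x y) (hG.preconnected x w)
    (by rw [dist_eq_one_iff_adj.mpr hxy]; omega)

lemma dist_deleteEdges_le_succ (hG : G.Connected) (hxy : G.Adj x y) (hxz : G.Adj x z)
    (hzy : G.Adj z y) (w : V) : (G.deleteEdges {s(x, y)}).dist x w ≤ G.dist x w + 1 := by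
  rcases le_or_gt (G.dist x w) (G.dist y w) with h | h
  · exact (dist_deleteEdges_le_of_dist_le hG hxy h).trans (Nat.le_succ _)
  have hyw : (G.deleteEdges {s(x, y)}).dist y w ≤ G.dist y w :=
    dist_deleteEdges_le_of_lt (Sym2.mem_mk_left x y) (hG.preconnected y w)
      (by rw [dist_eq_one_iff_adj.mpr hxy.symm]; omega)
  obtain ⟨hxz', hzy'⟩ := deleteEdges_adj_of_adj_of_adj hxz hzy
  have hxy' : (G.deleteEdges {s(x, y)}).dist x y ≤ 2 := dist_le (hxz'.toWalk.append hzy'.toWalk)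
  have := (hG.connected_deleteEdges_of_adj_of_adj hxz hzy).dist_triangle (u := x) (v := y) (w := w)
  omega

lemma dist_deleteEdges_le (hG : G.Connected) (hxy : G.Adj x y) (hxz : G.Adj x z)
    (hzy : G.Adj z y) (h : G.dist x w ≤ G.dist y w ∨ G.dist z w < G.dist x w) :
    (G.deleteEdges {s(x, y)}).dist x w ≤ G.dist x w := by
  rcases h with h | h
  · exact dist_deleteEdges_le_of_dist_le hG hxy h
  have hzw : (G.deleteEdges {s(x, y)}).dist z w ≤ G.dist z w :=
    dist_deleteEdges_le_of_lt (Sym2.mem_mk_left x y) (hG.preconnected z w)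
      (by rw [dist_eq_one_iff_adj.mpr hxz.symm]; omega)
  have hxz' := dist_eq_one_iff_adj.mpr (deleteEdges_adj_of_adj_of_adj hxz hzy).1
  have := (hG.connected_deleteEdges_of_adj_of_adj hxz hzy).dist_triangle (u := x) (v := z) (w := w)
  omega

end SimpleGraph

namespace NCG

section DetourSet

variable {V : Type*} [Fintype V]

noncomputable def detourSet (G : SimpleGraph V) (x y z : V) : Finset V :=
  {w | G.dist y w < G.dist x w ∧ G.dist x w ≤ G.dist z w}

variable {G : SimpleGraph V} {x y z : V}

lemma notMem_detourSet_left : x ∉ detourSet G x y z := by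
  simp [detourSet]

lemma notMem_detourSet_right : z ∉ detourSet G x y z := by
  simp only [detourSet, mem_filter, dist_self]
  omega

lemma disjoint_detourSet_swap : Disjoint (detourSet G x y z) (detourSet G x z y) := by
  simp only [detourSet, disjoint_filter]
  omega

lemma disjoint_detourSet_rotate : Disjoint (detourSet G x y z) (detourSet G y z x) := by
  simp only [detourSet, disjoint_filter]
  omega

lemma sum_dist_deleteEdges_le (hG : G.Connected) (hxy : G.Adj x y) (hxz : G.Adj x z)
    (hzy : G.Adj z y) :
    ∑ w, (G.deleteEdges {s(x, y)}).dist x w ≤ ∑ w, G.dist x w + #(detourSet G x y z) := by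
  classical
  calc ∑ w, (G.deleteEdges {s(x, y)}).dist x w
      ≤ ∑ w, (G.dist x w + if w ∈ detourSet G x y z then 1 else 0) := by
        refine sum_le_sum fun w _ ↦ ?_
        split_ifs with hw
        · exact dist_deleteEdges_le_succ hG hxy hxz hzy w
        · simp only [detourSet, mem_filter, mem_univ, true_and] at hw
          exact (dist_deleteEdges_le hG hxy hxz hzy (by omega)).trans (Nat.le_add_right _ _)
    _ = ∑ w, G.dist x w + #(detourSet G x y z) := by
        rw [sum_add_distrib, sum_boole, filter_mem_eq_inter, univ_inter, Nat.cast_id]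

end DetourSet

lemma exists_triangle_buys_two_edges {V : Type*} {st : V → Finset V} {u v w : V}
    (huv : (graph st).Adj u v) (hvw : (graph st).Adj v w) (hwu : (graph st).Adj w u) :
    ∃ x y z, (graph st).Adj x y ∧ (graph st).Adj y z ∧ (graph st).Adj z x ∧
      y ∈ st x ∧ (z ∈ st y ∨ z ∈ st x) := by
  rcases huv.2 with h₁ | h₁ <;> rcases hvw.2 with h₂ | h₂
  · exact ⟨u, v, w, huv, hvw, hwu, h₁, .inl h₂⟩
  · rcases hwu.2 with h₃ | h₃
    · exact ⟨w, v, u, hvw.symm, huv.symm, hwu.symm, h₂, .inr h₃⟩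
    · exact ⟨u, v, w, huv, hvw, hwu, h₁, .inr h₃⟩
  · exact ⟨v, u, w, huv.symm, hwu.symm, hvw.symm, h₁, .inr h₂⟩
  · exact ⟨w, v, u, hvw.symm, huv.symm, hwu.symm, h₂, .inl h₁⟩

lemma deleteEdges_le_graph_update_erase {V : Type*} [DecidableEq V] (st : V → Finset V)
    (x y : V) :
    (graph st).deleteEdges {s(x, y)} ≤ graph (Function.update st x ((st x).erase y)) := by
  have key : ∀ a b, b ∈ st a → s(a, b) ≠ s(x, y) →
      b ∈ Function.update st x ((st x).erase y) a := by
    intro a b hb hne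
    rcases eq_or_ne a x with rfl | hax
    · simp_all
    · rwa [Function.update_of_ne hax]
  intro a b h
  obtain ⟨⟨hab, hb | ha⟩, hne⟩ := deleteEdges_adj.mp h
  · exact ⟨hab, Or.inl (key a b hb hne)⟩
  · exact ⟨hab, Or.inr (key b a ha (by rwa [Sym2.eq_swap]))⟩

variable {V : Type*} [Fintype V] [DecidableEq V] {α : ℝ} {st : V → Finset V} {u x y z : V}

lemma cost_eq_of_connected (h : (graph st).Connected) (u : V) :
    cost α st u = ((α * #(st u) + ∑ w, ((graph st).dist u w : ℝ) : ℝ) : EReal) := by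
  rw [cost, distcost, if_pos h, EReal.coe_add]

lemma Stable.connected [Nonempty V] (hs : Stable α st) : (graph st).Connected := by
  obtain ⟨u⟩ := ‹Nonempty V›
  by_contra hG
  set st' := Function.update st u (univ.erase u)
  have hG' : (graph st').Connected := by
    have hu : ∀ w, (graph st').Reachable u w := fun w ↦ by
      rcases eq_or_ne w u with rfl | hw
      · rfl
      · exact Adj.reachable ⟨hw.symm, Or.inl (by simp [st', hw])⟩
    exact ⟨fun v w ↦ (hu v).symm.trans (hu w)⟩
  have := hs u _ (notMem_erase u univ)
  rw [cost_eq_of_connected hG', cost, distcost, if_neg hG, EReal.coe_add_top, top_le_iff] at this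
  exact EReal.coe_ne_top _ this

lemma Stable.cost_le {t : Finset V} (hs : Stable α st) (hu : u ∉ t)
    (h : (graph (Function.update st u t)).Connected) :
    α * #(st u) + ∑ w, ((graph st).dist u w : ℝ)
      ≤ α * #t + ∑ w, ((graph (Function.update st u t)).dist u w : ℝ) := by
  have : Nonempty V := ⟨u⟩
  have := hs u t hu
  rwa [cost_eq_of_connected hs.connected, cost_eq_of_connected h, Function.update_self,
    EReal.coe_le_coe_iff] at this

lemma Stable.le_card_detourSet (hs : Stable α st) (hx : x ∉ st x) (hy : y ∈ st x)
    (hxz : (graph st).Adj x z) (hzy : (graph st).Adj z y) :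
    α ≤ #(detourSet (graph st) x y z) := by
  have : Nonempty V := ⟨x⟩
  have hxy : (graph st).Adj x y := ⟨fun h ↦ hx (h ▸ hy), Or.inl hy⟩
  have hG := hs.connected
  have hH := hG.connected_deleteEdges_of_adj_of_adj hxz hzy
  have hle := deleteEdges_le_graph_update_erase st x y
  have hsum : ∑ w, (graph (Function.update st x ((st x).erase y))).dist x w
      ≤ ∑ w, (graph st).dist x w + #(detourSet (graph st) x y z) :=
    (sum_le_sum fun w _ ↦ (hH.preconnected x w).dist_anti hle).trans
      (sum_dist_deleteEdges_le hG hxy hxz hzy)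
  have hsum' : ∑ w, ((graph (Function.update st x ((st x).erase y))).dist x w : ℝ)
      ≤ ∑ w, ((graph st).dist x w : ℝ) + #(detourSet (graph st) x y z) := by
    exact_mod_cast hsum
  have hcost := hs.cost_le (fun h ↦ hx (mem_of_mem_erase h)) (hH.mono hle)
  have hcard : (#((st x).erase y) : ℝ) + 1 = #(st x) := by exact_mod_cast card_erase_add_one hy
  rw [← hcard, mul_add_one] at hcost
  linarith

end NCG

open NCG

/-- For `α > (n−1)/2`, no stable network contains a cycle of length 3. -/
theorem no_cycle_length_three {V : Type*} [Fintype V] [DecidableEq V]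
    (α : ℝ) (st : V → Finset V) (hself : ∀ u, u ∉ st u)
    (hα : ((Fintype.card V : ℝ) - 1) / 2 < α)
    (hstable : NCG.Stable α st) :
    ¬ ∃ (a : V) (c : (NCG.graph st).Walk a a), c.IsCycle ∧ c.length = 3 := by
  rw [← is3Clique_iff_exists_cycle_length_three]
  rintro ⟨s, hs⟩
  obtain ⟨a, b, c, hab, hac, hbc, -⟩ := is3Clique_iff.mp hs
  obtain ⟨x, y, z, hxy, hyz, hzx, hy, hz⟩ := exists_triangle_buys_two_edges hab hbc hac.symm
  obtain ⟨S, T, hST, hxS, hxT, hαS, hαT⟩ :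
      ∃ S T : Finset V, Disjoint S T ∧ x ∉ S ∧ x ∉ T ∧ α ≤ #S ∧ α ≤ #T := by
    have hαS := hstable.le_card_detourSet (hself x) hy hzx.symm hyz.symm
    rcases hz with hz | hz
    · exact ⟨_, _, disjoint_detourSet_rotate, notMem_detourSet_left, notMem_detourSet_right,
        hαS, hstable.le_card_detourSet (hself y) hz hxy.symm hzx.symm⟩
    · exact ⟨_, _, disjoint_detourSet_swap, notMem_detourSet_left, notMem_detourSet_left,
        hαS, hstable.le_card_detourSet (hself x) hz hxy hyz⟩
  have hcard : #S + #T < Fintype.card V := by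
    rw [← card_union_of_disjoint hST]
    exact card_lt_univ_of_notMem (x := x) (by simp [hxS, hxT])
  have : (#S : ℝ) + #T + 1 ≤ Fintype.card V := by exact_mod_cast hcard
  linarith
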